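/- For any nonzero real number a and any positive integer n, ∑_{k=1}^{⌊n/2⌋} C(2n,4k) E_{2n-4k,a} (a(-4)^k + 2(1-a)) = (-1)^n - (1/a) E_{2n,a}. -/

import Mathlib

/-!
Let `ℰ(t) = ∑ E_n tⁿ / n!`. The recurrence says exactly that `(a cosh t + 1 - a) ℰ(t) = 1`.
Multiplying by `a cos t + 1 - a` gives
`a² cos t cosh t ℰ + a (1 - a) (cos t + cosh t) ℰ = a cos t + (1 - a) (1 - (1 - a) ℰ)`,
and since `cos t cosh t = ∑ (-4)ᵏ t⁴ᵏ / (4k)!` (expand both factors into `e^{(±1 ± i) t}`, and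
`(±1 ± i)⁴ = -4`) while `cos t + cosh t = 2 ∑ t⁴ᵏ / (4k)!`, comparing the coefficients of `t²ⁿ`
gives the identity.
-/

open Finset

noncomputable def E (a : ℝ) : ℕ → ℝ
  | 0 => 1
  | n + 1 =>
      -a * ∑ k ∈ (Finset.Icc 1 ((n + 1) / 2)).attach,
        ((n + 1).choose (2 * k.1) : ℝ) * E a (n + 1 - 2 * k.1)
  decreasing_by
    have h := Finset.mem_Icc.mp k.2
    omega

noncomputable def EP (a : ℝ) (n : ℕ) (x : ℝ) : ℝ :=
  ∑ k ∈ Finset.range (n + 1), (n.choose k : ℝ) * E a k * x ^ (n - k)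

open PowerSeries
open scoped Nat

theorem Finset.sum_range_ite_dvd {M : Type*} [AddCommMonoid M] {d : ℕ} (hd : 0 < d) (N : ℕ)
    (g : ℕ → M) :
    ∑ m ∈ range (N + 1), (if d ∣ m then g m else 0) = ∑ k ∈ range (N / d + 1), g (d * k) := by
  rw [← sum_filter]
  have hfilter : (range (N + 1)).filter (d ∣ ·) = (range (N / d + 1)).image (d * ·) := by
    ext m
    simp only [mem_filter, mem_range, mem_image, Nat.lt_succ_iff, Nat.le_div_iff_mul_le hd]
    constructor
    · rintro ⟨hm, k, rfl⟩
      exact ⟨k, by linarith, rfl⟩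
    · rintro ⟨k, hk, rfl⟩
      exact ⟨by linarith, dvd_mul_right d k⟩
  rw [hfilter, sum_image fun _ _ _ _ h => Nat.eq_of_mul_eq_mul_left hd h]

theorem Finset.sum_range_succ_eq_add_sum_Icc {M : Type*} [AddCommMonoid M] (N : ℕ)
    (f : ℕ → M) :
    ∑ k ∈ range (N + 1), f k = f 0 + ∑ k ∈ Icc 1 N, f k := by
  rw [range_eq_Ico, sum_eq_sum_Ico_succ_bot (by omega : 0 < N + 1), zero_add,
    Ico_add_one_right_eq_Icc]

section egf

variable {K : Type*} [Field K]

def egf (f : ℕ → K) : K⟦X⟧ := mk fun n => f n / n !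

theorem coeff_egf (f : ℕ → K) (n : ℕ) : coeff n (egf f) = f n / n ! := coeff_mk _ _

theorem coeff_egf_mul [CharZero K] (f g : ℕ → K) (n : ℕ) :
    coeff n (egf f * egf g) = (∑ k ∈ range (n + 1), n.choose k * f k * g (n - k)) / n ! := by
  rw [coeff_mul,
    Nat.sum_antidiagonal_eq_sum_range_succ (fun i j => coeff i (egf f) * coeff j (egf g)), sum_div]
  refine sum_congr rfl fun k hk => ?_
  have hkn := mem_range_succ_iff.mp hk
  have hfac := Nat.choose_mul_factorial_mul_factorial hkn
  have hchoose : (n.choose k : K) ≠ 0 := by exact_mod_cast (Nat.choose_pos hkn).ne'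
  rw [coeff_egf, coeff_egf, ← hfac]
  push_cast
  field_simp

theorem egf_pow_mul_egf_pow [CharZero K] (z w : K) :
    egf (z ^ ·) * egf (w ^ ·) = egf ((z + w) ^ ·) := by
  ext n
  rw [coeff_egf_mul, coeff_egf, add_pow]
  congr 1
  exact sum_congr rfl fun k _ => by ring

theorem map_egf {L : Type*} [Field L] (g : K →+* L) (f : ℕ → K) :
    map g (egf f) = egf (g ∘ f) := by
  ext n
  simp [coeff_egf]

end egf

section trig

variable (K : Type*) [Field K]

def coshSeries : K⟦X⟧ := egf fun n => if 2 ∣ n then 1 else 0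

def cosSeries : K⟦X⟧ := egf fun n => if 2 ∣ n then (-1) ^ (n / 2) else 0

variable {K}

theorem map_coshSeries {L : Type*} [Field L] (g : K →+* L) :
    map g (coshSeries K) = coshSeries L := by
  simp [coshSeries, map_egf, Function.comp_def, apply_ite]

theorem map_cosSeries {L : Type*} [Field L] (g : K →+* L) :
    map g (cosSeries K) = cosSeries L := by
  simp [cosSeries, map_egf, Function.comp_def, apply_ite]

theorem cosSeries_add_coshSeries :
    cosSeries K + coshSeries K = egf fun n => if 4 ∣ n then 2 else 0 := by
  ext n
  rw [map_add, cosSeries, coshSeries, coeff_egf, coeff_egf, coeff_egf, ← add_div]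
  congr 1
  obtain ⟨k, r, hr, rfl⟩ : ∃ k r, r < 4 ∧ n = 4 * k + r :=
    ⟨n / 4, n % 4, Nat.mod_lt _ (by norm_num), (Nat.div_add_mod n 4).symm⟩
  interval_cases r
  · rw [if_pos (by omega), if_pos (by omega), if_pos (by omega),
      show (4 * k + 0) / 2 = 2 * k by omega, pow_mul]
    norm_num
  · rw [if_neg (by omega), if_neg (by omega), if_neg (by omega)]; ring
  · rw [if_pos (by omega), if_pos (by omega), if_neg (by omega),
      show (4 * k + 2) / 2 = 2 * k + 1 by omega, pow_succ, pow_mul]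
    norm_num
  · rw [if_neg (by omega), if_neg (by omega), if_neg (by omega)]; ring

theorem coshSeries_eq [CharZero K] :
    coshSeries K = C (1 / 2) * (egf (1 ^ ·) + egf ((-1) ^ ·)) := by
  ext n
  rw [coeff_C_mul, map_add, coshSeries, coeff_egf, coeff_egf, coeff_egf, ← add_div,
    ← mul_div_assoc, one_pow]
  congr 1
  by_cases h : Even n
  · rw [if_pos h.two_dvd, h.neg_one_pow]; norm_num
  · rw [if_neg (mt even_iff_two_dvd.mpr h), (Nat.not_even_iff_odd.mp h).neg_one_pow]; norm_num

open Complex in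
theorem cosSeries_complex_eq : cosSeries ℂ = C (1 / 2) * (egf (I ^ ·) + egf ((-I) ^ ·)) := by
  ext n
  rw [coeff_C_mul, map_add, cosSeries, coeff_egf, coeff_egf, coeff_egf, ← add_div, ← mul_div_assoc]
  congr 1
  obtain ⟨m, rfl | rfl⟩ := Nat.even_or_odd' n
  · rw [if_pos (dvd_mul_right 2 m), Nat.mul_div_cancel_left m two_pos, pow_mul, pow_mul, neg_sq,
      I_sq]
    ring
  · rw [if_neg (by omega), Odd.neg_pow ⟨m, rfl⟩]; ring

open Complex in
theorem sum_pow_pm_I_pm_one (n : ℕ) : (I + 1) ^ n + (I - 1) ^ n + (-I + 1) ^ n + (-I - 1) ^ n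
    = if 4 ∣ n then 4 * (-4) ^ (n / 4) else 0 := by
  obtain ⟨k, r, hr, rfl⟩ : ∃ k r, r < 4 ∧ n = 4 * k + r :=
    ⟨n / 4, n % 4, Nat.mod_lt _ (by norm_num), (Nat.div_add_mod n 4).symm⟩
  have h4 : ∀ z : ℂ, z ^ 2 = 2 * I ∨ z ^ 2 = -2 * I → z ^ (4 * k + r) = (-4) ^ k * z ^ r := by
    intro z hz
    rw [pow_add, pow_mul, show z ^ 4 = (z ^ 2) ^ 2 by ring]
    rcases hz with hz | hz <;> rw [hz, mul_pow, I_sq] <;> norm_num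
  rw [h4 _ (.inl (by linear_combination I_sq)), h4 _ (.inr (by linear_combination I_sq)),
    h4 _ (.inr (by linear_combination I_sq)), h4 _ (.inl (by linear_combination I_sq))]
  interval_cases r
  · rw [if_pos (by omega), show (4 * k + 0) / 4 = k by omega]; ring
  · rw [if_neg (by omega)]; ring
  · rw [if_neg (by omega)]; linear_combination 4 * (-4) ^ k * I_sq
  · rw [if_neg (by omega)]; ring

open Complex in
theorem cosSeries_mul_coshSeries_complex :
    cosSeries ℂ * coshSeries ℂ = egf fun n => if 4 ∣ n then (-4) ^ (n / 4) else 0 := by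
  have hC : C (1 / 4 : ℂ) = C (1 / 2) * C (1 / 2) := by rw [← map_mul]; norm_num
  have hprod : cosSeries ℂ * coshSeries ℂ =
      C (1 / 4) * (egf ((I + 1) ^ ·) + egf ((I + -1) ^ ·) + egf ((-I + 1) ^ ·) +
        egf ((-I + -1) ^ ·)) := by
    simp only [← egf_pow_mul_egf_pow, cosSeries_complex_eq, coshSeries_eq, hC]
    ring
  ext n
  simp only [hprod, coeff_C_mul, map_add, coeff_egf, ← sub_eq_add_neg, ← add_div,
    sum_pow_pm_I_pm_one]
  split_ifs <;> ring

/-- Over `ℂ`, `cos` and `cosh` are sums of exponentials; the identity descends to `ℚ` and thence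
to every field of characteristic zero. -/
theorem cosSeries_mul_coshSeries [CharZero K] :
    cosSeries K * coshSeries K = egf fun n => if 4 ∣ n then (-4) ^ (n / 4) else 0 := by
  have hℚ : cosSeries ℚ * coshSeries ℚ = egf fun n => if 4 ∣ n then (-4) ^ (n / 4) else 0 := by
    apply map_injective (algebraMap ℚ ℂ) (algebraMap ℚ ℂ).injective
    simpa [map_egf, map_cosSeries, map_coshSeries, Function.comp_def, apply_ite] using
      cosSeries_mul_coshSeries_complex
  simpa [map_egf, map_cosSeries, map_coshSeries, Function.comp_def, apply_ite] using
    congrArg (map (algebraMap ℚ K)) hℚ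

end trig

theorem E_eq_neg_mul_sum (a : ℝ) {m : ℕ} (hm : 1 ≤ m) :
    E a m = -a * ∑ k ∈ Icc 1 (m / 2), (m.choose (2 * k) : ℝ) * E a (m - 2 * k) := by
  cases m with
  | zero => omega
  | succ n =>
    rw [E, sum_attach (Icc 1 ((n + 1) / 2))
      fun k => ((n + 1).choose (2 * k) : ℝ) * E a (n + 1 - 2 * k)]

theorem mul_egf_E_eq_one (a : ℝ) : (C a * coshSeries ℝ + C (1 - a)) * egf (E a) = 1 := by
  ext m
  rw [add_mul, mul_assoc, map_add, coeff_C_mul, coeff_C_mul, coshSeries, coeff_egf_mul, coeff_egf,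
    coeff_one]
  simp only [mul_ite, ite_mul, mul_one, mul_zero, zero_mul]
  rw [sum_range_ite_dvd two_pos, sum_range_succ_eq_add_sum_Icc]
  rcases m with _ | m
  · simp [E]
  · have h := E_eq_neg_mul_sum a m.succ_pos
    rw [if_neg m.succ_ne_zero, mul_zero, Nat.choose_zero_right, Nat.sub_zero, Nat.cast_one]
    field_simp
    linear_combination h

theorem sum_choose_mul_E_mul_weight (a : ℝ) {n : ℕ} (hn : 1 ≤ n) :
    a * ∑ k ∈ range (n / 2 + 1), ((2 * n).choose (4 * k) : ℝ) * E a (2 * n - 4 * k) *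
      (a * (-4) ^ k + 2 * (1 - a)) = a * (-1) ^ n - (1 - a) ^ 2 * E a (2 * n) := by
  have key :
      C a * (C a * (cosSeries ℝ * coshSeries ℝ) + C (1 - a) * (cosSeries ℝ + coshSeries ℝ)) *
        egf (E a) = C a * cosSeries ℝ + C (1 - a) * (1 - C (1 - a) * egf (E a)) := by
    linear_combination (C a * cosSeries ℝ + C (1 - a)) * mul_egf_E_eq_one a
  have hweight : C a * (cosSeries ℝ * coshSeries ℝ) + C (1 - a) * (cosSeries ℝ + coshSeries ℝ) =
      egf fun m => if 4 ∣ m then a * (-4) ^ (m / 4) + 2 * (1 - a) else 0 := by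
    rw [cosSeries_mul_coshSeries, cosSeries_add_coshSeries]
    ext m
    simp only [map_add, coeff_C_mul, coeff_egf]
    split_ifs <;> ring
  rw [hweight, mul_assoc] at key
  have hcoeff := congrArg (coeff (2 * n)) key
  rw [coeff_C_mul, coeff_egf_mul, map_add, coeff_C_mul, cosSeries, coeff_egf, coeff_C_mul, map_sub,
    coeff_one, coeff_C_mul, coeff_egf] at hcoeff
  simp only [mul_ite, ite_mul, mul_zero, zero_mul] at hcoeff
  rw [sum_range_ite_dvd four_pos, show 2 * n / 4 = n / 2 by omega, if_pos (dvd_mul_right 2 n),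
    if_neg (by omega), Nat.mul_div_cancel_left n two_pos] at hcoeff
  simp only [Nat.mul_div_cancel_left _ four_pos, mul_right_comm _ _ (E a _)] at hcoeff
  field_simp at hcoeff
  linear_combination hcoeff

theorem stmt14 (a : ℝ) (ha : a ≠ 0) (n : ℕ) (hn : 1 ≤ n) :
    ∑ k ∈ Finset.Icc 1 (n / 2), ((2 * n).choose (4 * k) : ℝ) * E a (2 * n - 4 * k) *
        (a * (-4) ^ k + 2 * (1 - a)) = (-1) ^ n - 1 / a * E a (2 * n) := by
  have h := sum_choose_mul_E_mul_weight a hn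
  rw [sum_range_succ_eq_add_sum_Icc] at h
  simp only [mul_zero, Nat.choose_zero_right, Nat.sub_zero, pow_zero, Nat.cast_one, one_mul,
    mul_one] at h
  field_simp
  linear_combination h
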